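/- arXiv:math/0408348 — 2 statements merged into one kernel-verified Lean document; each statement's English description precedes it below -/
import Mathlib

section
/- Dendriform addition satisfies left and right cancellation: for tree names ū, and v̄, w̄ of equal degree, ū ∔ v̄ = ū ∔ w̄ implies v̄ = w̄, and v̄ ∔ ū = w̄ ∔ ū implies v̄ = w̄. -/
/-!
The under product `v ↖ w` is the largest element of `v ∔ w`: it is itself a tree name (the name of
`w` grafted onto the rightmost leaf of `v`), and `v ↗ w ≤ v ↖ w` since `len v ▷` only shifts
coordinates up. So equal dendriform sums have equal under products, and `v ↖ w` determines `w`
given `v` (a shift of `w` is appended to `v`), and determines `v` given `w` and `len v`.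
-/

/-- Planar rooted binary trees. -/
inductive PB : Type
  | leaf : PB
  | node : PB → PB → PB
  deriving DecidableEq

namespace PB

/-- The name (vector encoding) of a planar binary tree. -/
def name : PB → List ℕ
  | leaf => []
  | node l r => name l ++ [1] ++ (name r).map (fun x => x + (name l).length + 1)

/-- Number of internal (trivalent) vertices. -/
def nodes : PB → ℕ
  | leaf => 0
  | node l r => nodes l + nodes r + 1

/-- Mirror image of a tree. -/
def mirror : PB → PB
  | leaf => leaf
  | node l r => node (mirror r) (mirror l)

/-- Left subtree. -/
def left : PB → PB
  | leaf => leaf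
  | node l _ => l

/-- Right subtree. -/
def right : PB → PB
  | leaf => leaf
  | node _ r => r

end PB

/-- Grafting on vectors: v ∨ w = (v, 1, w + (len v + 1)). -/
def graft (v w : List ℕ) : List ℕ := v ++ [1] ++ w.map (fun x => x + v.length + 1)

/-- A list is a tree name if it is the name of some planar binary tree. -/
def TreeName (v : List ℕ) : Prop := ∃ t : PB, PB.name t = v

/-- Componentwise order on vectors (of the same length). -/
def vle (v w : List ℕ) : Prop := List.Forall₂ (· ≤ ·) v w

/-- Strict componentwise order. -/
def vlt (v w : List ℕ) : Prop := vle v w ∧ v ≠ w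

/-- k ▷ w : shift all coordinates ≠ 1 by k, fix coordinates equal to 1. -/
def rsh (k : ℕ) (w : List ℕ) : List ℕ := w.map (fun x => if x = 1 then 1 else x + k)

/-- The over operation on tree names: v ↗ w = (v, len v ▷ w). -/
def overOp (v w : List ℕ) : List ℕ := v ++ rsh v.length w

/-- The under operation on tree names: v ↖ w = (v, len v + w). -/
def under (v w : List ℕ) : List ℕ := v ++ w.map (fun x => x + v.length)

/-- Componentwise interval of lists. -/
def listIcc : List ℕ → List ℕ → Finset (List ℕ)
  | a :: as, b :: bs => ((Finset.Icc a b) ×ˢ listIcc as bs).image fun p => p.1 :: p.2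
  | _, _ => {[]}

open Classical in
/-- Componentwise interval of tree names. -/
noncomputable def treeIcc (a b : List ℕ) : Finset (List ℕ) :=
  (listIcc a b).filter TreeName

/-- Dendriform addition of tree names: all tree names t with v ↗ w ≤ t ≤ v ↖ w. -/
noncomputable def dplus (v w : List ℕ) : Finset (List ℕ) :=
  treeIcc (overOp v w) (under v w)

namespace PB

def graftRight : PB → PB → PB
  | leaf, t => t
  | node l r, t => node l (graftRight r t)

theorem name_graftRight (s t : PB) : (graftRight s t).name = under s.name t.name := by
  induction s with
  | leaf => simp [graftRight, under, name]
  | node l r _ ihr =>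
    simp only [graftRight, name, under, ihr, List.map_append, List.map_map, List.length_append,
      List.length_map, List.length_cons, List.length_nil, List.append_assoc]
    congr 3
    exact List.map_congr_left fun x _ => by simp only [Function.comp_apply]; omega

end PB

theorem TreeName.under {v w : List ℕ} (hv : TreeName v) (hw : TreeName w) :
    TreeName (under v w) := by
  obtain ⟨s, rfl⟩ := hv
  obtain ⟨t, rfl⟩ := hw
  exact ⟨s.graftRight t, s.name_graftRight t⟩

theorem vle_refl (v : List ℕ) : vle v v := List.forall₂_same.mpr fun _ _ => le_rfl

theorem vle_antisymm {v w : List ℕ} (hvw : vle v w) (hwv : vle w v) : v = w := by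
  induction hvw with
  | nil => rfl
  | cons hab _ ih =>
    obtain _ | ⟨hba, htail⟩ := hwv
    rw [le_antisymm hab hba, ih htail]

theorem mem_listIcc {a b x : List ℕ} (hab : a.length = b.length) :
    x ∈ listIcc a b ↔ vle a x ∧ vle x b := by
  induction a generalizing b x with
  | nil =>
    obtain rfl := List.eq_nil_of_length_eq_zero hab.symm
    simp only [listIcc, Finset.mem_singleton]
    constructor
    · rintro rfl
      exact ⟨.nil, .nil⟩
    · rintro ⟨hax, -⟩
      cases hax
      rfl
  | cons a as ih =>
    obtain _ | ⟨b, bs⟩ := b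
    · simp at hab
    have hlen : as.length = bs.length := by simpa using hab
    simp only [listIcc, Finset.mem_image, Finset.mem_product, Finset.mem_Icc]
    constructor
    · rintro ⟨⟨c, cs⟩, ⟨⟨hac, hcb⟩, hcs⟩, rfl⟩
      obtain ⟨hlo, hhi⟩ := (ih hlen).mp hcs
      exact ⟨.cons hac hlo, .cons hcb hhi⟩
    · rintro ⟨_ | ⟨hac, hlo⟩, _ | ⟨hcb, hhi⟩⟩
      exact ⟨(_, _), ⟨⟨hac, hcb⟩, (ih hlen).mpr ⟨hlo, hhi⟩⟩, rfl⟩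

theorem vle_rsh_map_add (k : ℕ) (w : List ℕ) : vle (rsh k w) (w.map (· + k)) := by
  induction w with
  | nil => exact .nil
  | cons a _ ih =>
    refine .cons ?_ ih
    by_cases h : a = 1 <;> simp [h]

theorem vle_overOp_under (v w : List ℕ) : vle (overOp v w) (under v w) :=
  List.rel_append (vle_refl v) (vle_rsh_map_add v.length w)

theorem mem_dplus {v w x : List ℕ} :
    x ∈ dplus v w ↔ (vle (overOp v w) x ∧ vle x (under v w)) ∧ TreeName x := by
  classical
  rw [dplus, treeIcc, Finset.mem_filter, mem_listIcc (by simp [overOp, under, rsh])]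

theorem under_mem_dplus {v w : List ℕ} (hv : TreeName v) (hw : TreeName w) :
    under v w ∈ dplus v w :=
  mem_dplus.mpr ⟨⟨vle_overOp_under v w, vle_refl _⟩, hv.under hw⟩

theorem under_eq_of_dplus_eq {v w v' w' : List ℕ} (hv : TreeName v) (hw : TreeName w)
    (hv' : TreeName v') (hw' : TreeName w') (h : dplus v w = dplus v' w') :
    under v w = under v' w' :=
  vle_antisymm (mem_dplus.mp (h ▸ under_mem_dplus hv hw)).1.2
    (mem_dplus.mp (h ▸ under_mem_dplus hv' hw')).1.2

theorem under_left_cancel {u v w : List ℕ} (h : under u v = under u w) : v = w :=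
  (List.map_injective_iff.mpr (add_left_injective u.length)) (List.append_cancel_left h)

theorem under_right_cancel {u v w : List ℕ} (hlen : v.length = w.length)
    (h : under v u = under w u) : v = w := by
  rw [under, under, hlen] at h
  exact List.append_inj_left' h rfl

/-- Left and right cancellation for the dendriform addition. -/
theorem stmt12 (u v w : List ℕ) (hu : TreeName u) (hv : TreeName v) (hw : TreeName w)
    (hlen : v.length = w.length) :
    (dplus u v = dplus u w → v = w) ∧ (dplus v u = dplus w u → v = w) :=
  ⟨fun h => under_left_cancel (under_eq_of_dplus_eq hu hv hu hw h),
    fun h => under_right_cancel hlen (under_eq_of_dplus_eq hv hu hw hu h)⟩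
end

section
/- For tree names, the Möbius function of the Tamari lattice satisfies M(v̄ ↗ w̄) = M(v̄)·M(w̄), and M(v̄ ↖ w̄) = (-1)^m · M(v̄) if w̄ = (1,2,...,m) (the right comb) and M(v̄ ↖ w̄) = 0 otherwise. -/
/-- The Möbius function μ(0̂, v) of the Tamari lattice on tree names:
(-1)^#{i : v_i = i ≠ 1} if every coordinate v_i equals 1 or i, and 0 otherwise. -/
def Mob (v : List ℕ) : ℤ :=
  if ∀ i : Fin v.length, v.get i = 1 ∨ v.get i = i.val + 1 then
    (-1) ^ (Finset.univ.filter
      (fun i : Fin v.length => v.get i = i.val + 1 ∧ v.get i ≠ 1)).card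
  else 0

/-!
Both `Mob` and the two operations are coordinatewise, so `Mob v` factors as a product over
positions `i` of a local weight of `v_i` (`1` if `v_i = 1`, `-1` if `v_i = i + 1`, `0` otherwise).
Appending the block `len v ▷ w` after `v` moves each entry `x ≠ 1` of `w` and its position by the
same amount, so its weight is unchanged and `M(v ↗ w) = M(v) M(w)`. In `v ↖ w = (v, len v + w)`
no entry of the second block equals `1`, so each entry must sit on the diagonal: the block
contributes `(-1)^m` if `w = (1, …, m)` and `0` otherwise.
-/

def mobFactor (i x : ℕ) : ℤ := if x = 1 then 1 else if x = i + 1 then -1 else 0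

/-- Möbius weight of a list whose first entry sits at (0-based) position `k`. -/
def mobFrom : ℕ → List ℕ → ℤ
  | _, [] => 1
  | k, x :: xs => mobFactor k x * mobFrom (k + 1) xs

lemma mobFrom_append (a b : List ℕ) (k : ℕ) :
    mobFrom k (a ++ b) = mobFrom k a * mobFrom (k + a.length) b := by
  induction a generalizing k with
  | nil => simp [mobFrom]
  | cons x xs ih =>
    rw [List.cons_append, mobFrom, mobFrom, ih, mul_assoc, List.length_cons,
      Nat.add_right_comm, Nat.add_assoc]

lemma mobFrom_eq_prod (v : List ℕ) (k : ℕ) :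
    mobFrom k v = ∏ i : Fin v.length, mobFactor (k + i) v[i] := by
  induction v generalizing k with
  | nil => simp [mobFrom]
  | cons x xs ih =>
    simp [mobFrom, ih, Fin.prod_univ_succ, Nat.add_assoc, Nat.add_comm 1]

lemma Mob_eq_prod (v : List ℕ) : Mob v = ∏ i : Fin v.length, mobFactor i v[i] := by
  classical
  unfold Mob
  split_ifs with hgood
  · have hfactor : ∀ i : Fin v.length, mobFactor i v[i] =
        if v.get i = i.val + 1 ∧ v.get i ≠ 1 then -1 else 1 := by
      intro i
      rcases hgood i with h | h <;> simp_all [mobFactor]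
    simp only [hfactor, Finset.prod_ite, Finset.prod_const, one_pow, mul_one]
  · simp only [not_forall, not_or] at hgood
    obtain ⟨i, hi1, hi2⟩ := hgood
    refine (Finset.prod_eq_zero (Finset.mem_univ i) ?_).symm
    simp_all [mobFactor]

lemma Mob_eq_mobFrom (v : List ℕ) : Mob v = mobFrom 0 v := by
  simp [Mob_eq_prod, mobFrom_eq_prod]

lemma mobFactor_rsh {x : ℕ} (hx : 1 ≤ x) (n k : ℕ) :
    mobFactor (n + k) (if x = 1 then 1 else x + n) = mobFactor k x := by
  unfold mobFactor
  split_ifs <;> omega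

lemma mobFrom_rsh (n : ℕ) {w : List ℕ} (hw : ∀ x ∈ w, 1 ≤ x) (k : ℕ) :
    mobFrom (n + k) (rsh n w) = mobFrom k w := by
  induction w generalizing k with
  | nil => simp [rsh, mobFrom]
  | cons x xs ih =>
    simp only [rsh, List.map_cons] at ih ⊢
    rw [mobFrom, mobFrom, mobFactor_rsh (hw x List.mem_cons_self), Nat.add_assoc,
      ih (fun y hy => hw y (List.mem_cons_of_mem _ hy))]

lemma mobFactor_add {n x : ℕ} (hn : 1 ≤ n) (hx : 1 ≤ x) (k : ℕ) :
    mobFactor (n + k) (x + n) = if x = k + 1 then -1 else 0 := by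
  unfold mobFactor
  split_ifs <;> omega

lemma mobFrom_map_add {n : ℕ} (hn : 1 ≤ n) {w : List ℕ} (hw : ∀ x ∈ w, 1 ≤ x) (k : ℕ) :
    mobFrom (n + k) (w.map (· + n)) =
      if w = List.range' (k + 1) w.length then (-1) ^ w.length else 0 := by
  induction w generalizing k with
  | nil => simp [mobFrom]
  | cons x xs ih =>
    rw [List.map_cons, mobFrom, mobFactor_add hn (hw x List.mem_cons_self), Nat.add_assoc,
      ih (fun y hy => hw y (List.mem_cons_of_mem _ hy)), List.length_cons, List.range'_succ]
    by_cases hx : x = k + 1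
    · simp only [hx, List.cons.injEq, true_and, if_true]
      split_ifs <;> ring
    · simp [hx]

lemma PB.one_le_of_mem_name (t : PB) : ∀ x ∈ t.name, 1 ≤ x := by
  induction t with
  | leaf => simp [PB.name]
  | node l r ihl ihr =>
    simp only [PB.name, List.mem_append, List.mem_map, List.mem_singleton]
    rintro x ((hx | rfl) | ⟨y, -, rfl⟩)
    exacts [ihl x hx, le_rfl, by omega]

lemma Mob_overOp (v : List ℕ) {w : List ℕ} (hw : ∀ x ∈ w, 1 ≤ x) :
    Mob (overOp v w) = Mob v * Mob w := by
  have hshift := mobFrom_rsh v.length hw 0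
  rw [Nat.add_zero] at hshift
  rw [Mob_eq_mobFrom, overOp, mobFrom_append, Nat.zero_add, hshift, Mob_eq_mobFrom,
    Mob_eq_mobFrom]

lemma Mob_under {v w : List ℕ} (hv : v ≠ []) (hw : ∀ x ∈ w, 1 ≤ x) :
    Mob (under v w) =
      if w = (List.range w.length).map (· + 1) then (-1) ^ w.length * Mob v else 0 := by
  have hcomb : (List.range w.length).map (· + 1) = List.range' 1 w.length := by
    simp [List.range'_eq_map_range, Nat.add_comm 1]
  have hshift := mobFrom_map_add (List.length_pos_iff.mpr hv) hw 0
  rw [Nat.add_zero] at hshift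
  rw [Mob_eq_mobFrom, under, mobFrom_append, Nat.zero_add, hshift, hcomb, Mob_eq_mobFrom]
  split_ifs <;> ring

theorem stmt19_general (v w : List ℕ) (hw : TreeName w)
    (hv0 : v ≠ []) :
    Mob (overOp v w) = Mob v * Mob w ∧
    (w = (List.range w.length).map (· + 1) →
      Mob (under v w) = (-1) ^ w.length * Mob v) ∧
    (w ≠ (List.range w.length).map (· + 1) → Mob (under v w) = 0) := by
  obtain ⟨t, rfl⟩ := hw
  have hpos := t.one_le_of_mem_name
  refine ⟨Mob_overOp v hpos, fun hcomb => ?_, fun hcomb => ?_⟩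
  · rw [Mob_under hv0 hpos, if_pos hcomb]
  · rw [Mob_under hv0 hpos, if_neg hcomb]

/-- Behaviour of the Tamari Möbius function under the over and under operations:
M(v ↗ w) = M(v)·M(w); M(v ↖ w) = (-1)^m · M(v) if w is the right comb
(1, 2, …, m), and M(v ↖ w) = 0 otherwise. -/
theorem stmt19 (v w : List ℕ) (hv : TreeName v) (hw : TreeName w)
    (hv0 : v ≠ []) (hw0 : w ≠ []) :
    Mob (overOp v w) = Mob v * Mob w ∧
    (w = (List.range w.length).map (· + 1) →
      Mob (under v w) = (-1) ^ w.length * Mob v) ∧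
    (w ≠ (List.range w.length).map (· + 1) → Mob (under v w) = 0) :=
  stmt19_general v w hw hv0
end
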